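/- Strict growth of the generalized tangent: let m ≥ 1 be an integer and s a generalized sine function of order m. If a < b are real numbers such that s'(x) > 0 for all x ∈ [a, b], then s(b)/s'(b) − s(a)/s'(a) > b − a. -/

import Mathlib

/-- A generalized sine function of order `m ≥ 1`: a twice continuously differentiable
function `s : ℝ → ℝ` with `s'' = -m * s^(2m-1)`, `s 0 = 0` and `s' 0 = 1`. -/
def IsGenSine (m : ℕ) (s : ℝ → ℝ) : Prop :=
  ContDiff ℝ 2 s ∧ (∀ x : ℝ, deriv (deriv s) x = -(m : ℝ) * s x ^ (2 * m - 1)) ∧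
    s 0 = 0 ∧ deriv s 0 = 1

/-- strict growth of the generalized tangent: if `s' > 0` on `[a, b]`
with `a < b`, then `s(b)/s'(b) - s(a)/s'(a) > b - a`. -/
theorem generalized_tangent_strict_growth (m : ℕ) (hm : 1 ≤ m) (s : ℝ → ℝ)
    (hs : IsGenSine m s) (a b : ℝ) (hab : a < b)
    (hpos : ∀ x ∈ Set.Icc a b, 0 < deriv s x) :
    b - a < s b / deriv s b - s a / deriv s a := by
  obtain ⟨hcd, hode, hs0, hs'0⟩ := hs
  have hds : Differentiable ℝ s := hcd.differentiable (by norm_num)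
  have hds' : Differentiable ℝ (deriv s) :=
    (hcd.iterate_deriv' 1 1).differentiable (by norm_num)
  have hcs : Continuous s := hds.continuous
  have hcs' : Continuous (deriv s) := hds'.continuous
  set f : ℝ → ℝ := fun x => 1 + (m : ℝ) * s x ^ (2 * m) / (deriv s x) ^ 2 with hf
  -- derivative of the tangent
  have hderiv : ∀ x ∈ Set.Icc a b, HasDerivAt (fun y => s y / deriv s y) (f x) x := by
    intro x hx
    have hne : deriv s x ≠ 0 := (hpos x hx).ne'
    have h1 : HasDerivAt s (deriv s x) x := hds.differentiableAt.hasDerivAt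
    have h2 : HasDerivAt (deriv s) (deriv (deriv s) x) x := hds'.differentiableAt.hasDerivAt
    have h3 : HasDerivAt (fun y => s y / deriv s y) _ x := h1.div h2 hne
    convert h3 using 1
    rw [hode x, hf]
    have hpow : (m : ℝ) * s x * s x ^ (m * 2 - 1) = (m : ℝ) * s x ^ (m * 2) := by
      rw [mul_assoc, ← pow_succ']
      congr 2
      omega
    field_simp
    ring_nf
    rw [hpow]
  -- continuity of f on [a,b]
  have hfc : ContinuousOn f (Set.Icc a b) := by
    apply ContinuousOn.add continuousOn_const
    apply ContinuousOn.div
    · exact (continuous_const.mul (hcs.pow _)).continuousOn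
    · exact (hcs'.pow 2).continuousOn
    · intro x hx
      exact pow_ne_zero _ (hpos x hx).ne'
  -- FTC
  have hftc : ∫ x in a..b, f x = s b / deriv s b - s a / deriv s a := by
    apply intervalIntegral.integral_eq_sub_of_hasDerivAt
    · intro x hx
      rw [Set.uIcc_of_le hab.le] at hx
      exact hderiv x hx
    · rw [← Set.uIcc_of_le hab.le] at hfc
      exact hfc.intervalIntegrable
  -- s is strictly monotone on [a,b], so it has at most one zero; pick c with s c ≠ 0
  have hmono : StrictMonoOn s (Set.Icc a b) := by
    apply strictMonoOn_of_deriv_pos (convex_Icc a b) hcs.continuousOn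
    intro x hx
    rw [interior_Icc] at hx
    exact hpos x (Set.Ioo_subset_Icc_self hx)
  set d := a + (b - a) / 3 with hd
  set e := a + 2 * (b - a) / 3 with he
  have hdI : d ∈ Set.Icc a b := by constructor <;> [skip; skip] <;> simp [hd] <;> linarith
  have heI : e ∈ Set.Icc a b := by constructor <;> [skip; skip] <;> simp [he] <;> linarith
  have hde : d < e := by simp [hd, he]; linarith
  have hc : ∃ c ∈ Set.Icc a b, s c ≠ 0 := by
    by_cases h1 : s d = 0
    · refine ⟨e, heI, ?_⟩
      have := hmono hdI heI hde
      rw [h1] at this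
      exact this.ne'
    · exact ⟨d, hdI, h1⟩
  obtain ⟨c, hcI, hcne⟩ := hc
  -- strict integral inequality
  have hlt : (∫ x in a..b, (1 : ℝ)) < ∫ x in a..b, f x := by
    apply intervalIntegral.integral_lt_integral_of_continuousOn_of_le_of_exists_lt hab
      continuousOn_const hfc
    · intro x hx
      have hx' : x ∈ Set.Icc a b := Set.Ioc_subset_Icc_self hx
      have : 0 ≤ (m : ℝ) * s x ^ (2 * m) / (deriv s x) ^ 2 := by
        apply div_nonneg
        · apply mul_nonneg (by positivity)
          have : s x ^ (2 * m) = (s x ^ m) ^ 2 := by rw [← pow_mul, mul_comm]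
          rw [this]; positivity
        · positivity
      simp [hf]; linarith
    · refine ⟨c, hcI, ?_⟩
      have h1 : 0 < (m : ℝ) * s c ^ (2 * m) / (deriv s c) ^ 2 := by
        apply div_pos
        · apply mul_pos (by exact_mod_cast hm)
          have : s c ^ (2 * m) = (s c ^ m) ^ 2 := by rw [← pow_mul, mul_comm]
          rw [this]
          positivity
        · exact pow_pos (hpos c hcI) 2
      simp [hf]; linarith
  simp only [intervalIntegral.integral_const, smul_eq_mul, mul_one] at hlt
  rwa [hftc] at hlt
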